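/- arXiv:2206.04358 — 3 statements merged into one kernel-verified Lean document; each statement's English description precedes it below -/
import Mathlib

section
/- For f'(0) > 0, the function λ ↦ (e^λ - 2 + e^{-λ} + f'(0))/λ on (0,∞) attains its minimum at a unique point λ* > 0, and at this minimizer the pair (c*, λ*) with c* the minimal value satisfies both c*·λ* = e^{λ*} - 2 + e^{-λ*} + f'(0) and c* = e^{λ*} - e^{-λ*}. -/
/-!
Write `g x = e^x - 2 + e^{-x}`, so `g' x = e^x - e^{-x}`. The quantity `x g'(x) - g(x)` vanishes
at `0` and is unbounded, so by the intermediate value theorem some `λ* > 0` has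
`λ* g'(λ*) = g(λ*) + a`: the tangent to `g` at `λ*` passes through `(0, -a)`. As `g` is convex it
lies above this tangent, which gives `g x + a ≥ g'(λ*) x`, i.e. `F ≥ g'(λ*) = F(λ*)` on `(0, ∞)`.
Two minimizers have the same value `F(λ*) = g'(λ*) = 2 sinh λ*`, and `sinh` is injective.
-/

open Real

lemma exp_add_mul_sub_le_exp (l x : ℝ) : exp l + exp l * (x - l) ≤ exp x := by
  have h := mul_le_mul_of_nonneg_left (add_one_le_exp (x - l)) (exp_pos l).le
  rwa [← exp_add, add_sub_cancel, mul_add, mul_one, add_comm] at h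

lemma exp_sub_two_add_exp_neg_tangent_le (l x : ℝ) :
    exp l - 2 + exp (-l) + (exp l - exp (-l)) * (x - l) ≤ exp x - 2 + exp (-x) := by
  linarith [exp_add_mul_sub_le_exp l x, exp_add_mul_sub_le_exp (-l) (-x)]

lemma exp_sub_exp_neg_injective : Function.Injective fun x : ℝ => exp x - exp (-x) := by
  intro x y h
  apply sinh_injective
  simp only [sinh_eq]
  linarith [h]

lemma exists_pos_mul_exp_sub_exp_neg_eq {a : ℝ} (ha : 0 < a) :
    ∃ l : ℝ, 0 < l ∧ l * (exp l - exp (-l)) = exp l - 2 + exp (-l) + a := by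
  let H : ℝ → ℝ := fun x => x * (exp x - exp (-x)) - (exp x - 2 + exp (-x))
  have hH0 : H 0 = 0 := by norm_num [H]
  have hHb : a ≤ H (a + 2) := by
    have h1 := add_one_le_exp (a + 2)
    have h2 : exp (-(a + 2)) ≤ 1 := exp_le_one_iff.mpr (by linarith)
    have h3 := exp_pos (-(a + 2))
    nlinarith
  have hcont : ContinuousOn H (Set.Icc 0 (a + 2)) := by fun_prop
  obtain ⟨l, hl, hHl⟩ :=
    intermediate_value_Icc (by linarith) hcont ⟨hH0.symm ▸ ha.le, hHb⟩
  refine ⟨l, lt_of_le_of_ne hl.1 ?_, by linarith [hHl]⟩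
  rintro rfl
  linarith [hH0 ▸ hHl]

/-- For `a = f'(0) > 0`, the function `F(λ) = (e^λ - 2 + e^{-λ} + a)/λ` on `(0,∞)`
attains its minimum at a unique point `λ* > 0`, and with `c* = F(λ*)` one has
`c* λ* = e^{λ*} - 2 + e^{-λ*} + a` and `c* = e^{λ*} - e^{-λ*}`. -/
theorem stmt_0 (a : ℝ) (ha : 0 < a)
    (F : ℝ → ℝ) (hF : ∀ x : ℝ, F x = (Real.exp x - 2 + Real.exp (-x) + a) / x) :
    ∃! l : ℝ, 0 < l ∧ (∀ x : ℝ, 0 < x → F l ≤ F x) ∧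
      F l * l = Real.exp l - 2 + Real.exp (-l) + a ∧
      F l = Real.exp l - Real.exp (-l) := by
  obtain ⟨l, hl, hla⟩ := exists_pos_mul_exp_sub_exp_neg_eq ha
  have hFl : F l = exp l - exp (-l) := by
    rw [hF, div_eq_iff hl.ne', mul_comm, hla]
  have hmin : ∀ x : ℝ, 0 < x → F l ≤ F x := by
    intro x hx
    rw [hFl, hF, le_div_iff₀ hx]
    linarith [exp_sub_two_add_exp_neg_tangent_le l x]
  refine ⟨l, ⟨hl, hmin, by rw [hFl, mul_comm, hla], hFl⟩, ?_⟩
  rintro m ⟨hm, hmmin, -, hFm⟩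
  apply exp_sub_exp_neg_injective
  simp only [← hFm, ← hFl]
  exact le_antisymm (hmmin l hl) (hmin m hm)
end

section
/- Let λ* > 0 and c* = e^{λ*} − e^{−λ*}. The function ϖ(ν) := log ρ₋(ν) is analytic near ν = 0 with Taylor expansion ϖ(ν) = −ν/c* + cosh(λ*) ν²/c*³ − Λ* ν³/c*⁵ + O(|ν|⁴), where Λ* = 2 + c*²/3. -/
/-!
Since `ρ₋ = exp ϖ` is a root of the quadratic, dividing it by `e^{λ*} ρ₋` gives
`e^{ϖ - λ*} + e^{λ* - ϖ} = ν + 2 cosh λ*`: `ϖ` is a local right inverse of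
`g z = 2 cosh (z - λ*) - 2 cosh λ*`. Differentiating `g ∘ ϖ = id` three times (Faà di Bruno) and
inserting `g'(0) = -c*`, `g''(0) = 2 cosh λ*`, `g'''(0) = -c*` and `cosh² λ* = 1 + c*²/4` is
series reversion to third order.
-/

open Filter Topology

section

variable {𝕜 : Type*} [NontriviallyNormedField 𝕜] [CompleteSpace 𝕜] {f w : 𝕜 → 𝕜} {x : 𝕜}

theorem AnalyticAt.hasDerivAt_iteratedDeriv (hf : AnalyticAt 𝕜 f x) (n : ℕ) :
    HasDerivAt (iteratedDeriv n f) (iteratedDeriv (n + 1) f x) x := by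
  rw [iteratedDeriv_succ, iteratedDeriv_eq_iterate]
  exact (hf.iterated_deriv n).differentiableAt.hasDerivAt

theorem AnalyticAt.eventually_analyticAt_comp (hf : AnalyticAt 𝕜 f (w x)) (hw : AnalyticAt 𝕜 w x) :
    ∀ᶠ y in 𝓝 x, AnalyticAt 𝕜 f (w y) ∧ AnalyticAt 𝕜 w y :=
  (hw.continuousAt.eventually hf.eventually_analyticAt).and hw.eventually_analyticAt

theorem iteratedDeriv_two_comp (hf : AnalyticAt 𝕜 f (w x)) (hw : AnalyticAt 𝕜 w x) :
    iteratedDeriv 2 (f ∘ w) x =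
      iteratedDeriv 2 f (w x) * deriv w x ^ 2 + deriv f (w x) * iteratedDeriv 2 w x := by
  have hderiv : deriv (f ∘ w) =ᶠ[𝓝 x] fun y => deriv f (w y) * deriv w y := by
    filter_upwards [hf.eventually_analyticAt_comp hw] with y ⟨hfy, hwy⟩
    exact deriv_comp y hfy.differentiableAt hwy.differentiableAt
  have hf1 := hf.hasDerivAt_iteratedDeriv 1
  have hw1 := hw.hasDerivAt_iteratedDeriv 1
  simp only [iteratedDeriv_one] at hf1 hw1
  rw [iteratedDeriv_succ, iteratedDeriv_one, hderiv.deriv_eq]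
  exact ((hf1.comp x hw.differentiableAt.hasDerivAt).mul hw1).deriv.trans
    (by simp only [Function.comp_apply]; ring)

theorem iteratedDeriv_three_comp (hf : AnalyticAt 𝕜 f (w x)) (hw : AnalyticAt 𝕜 w x) :
    iteratedDeriv 3 (f ∘ w) x =
      iteratedDeriv 3 f (w x) * deriv w x ^ 3
        + 3 * iteratedDeriv 2 f (w x) * deriv w x * iteratedDeriv 2 w x
        + deriv f (w x) * iteratedDeriv 3 w x := by
  have hderiv2 : iteratedDeriv 2 (f ∘ w) =ᶠ[𝓝 x] fun y =>
      iteratedDeriv 2 f (w y) * deriv w y ^ 2 + deriv f (w y) * iteratedDeriv 2 w y := by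
    filter_upwards [hf.eventually_analyticAt_comp hw] with y ⟨hfy, hwy⟩
    exact iteratedDeriv_two_comp hfy hwy
  have hw0 := hw.differentiableAt.hasDerivAt
  have hf1 := hf.hasDerivAt_iteratedDeriv 1
  have hw1 := hw.hasDerivAt_iteratedDeriv 1
  have hf2 := hf.hasDerivAt_iteratedDeriv 2
  have hw2 := hw.hasDerivAt_iteratedDeriv 2
  simp only [iteratedDeriv_one] at hf1 hw1
  rw [iteratedDeriv_succ, hderiv2.deriv_eq]
  exact (((hf2.comp x hw0).mul (hw1.pow 2)).add
    ((hf1.comp x hw0).mul hw2)).deriv.trans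
    (by simp only [Function.comp_apply, Pi.pow_apply]; ring)

theorem iteratedDeriv_relations_of_comp_eventuallyEq_id (hf : AnalyticAt 𝕜 f (w x))
    (hw : AnalyticAt 𝕜 w x) (hfw : f ∘ w =ᶠ[𝓝 x] id) :
    deriv f (w x) * deriv w x = 1 ∧
    iteratedDeriv 2 f (w x) * deriv w x ^ 2 + deriv f (w x) * iteratedDeriv 2 w x = 0 ∧
    iteratedDeriv 3 f (w x) * deriv w x ^ 3
        + 3 * iteratedDeriv 2 f (w x) * deriv w x * iteratedDeriv 2 w x
        + deriv f (w x) * iteratedDeriv 3 w x = 0 := by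
  refine ⟨?_, ?_, ?_⟩
  · rw [← deriv_comp x hf.differentiableAt hw.differentiableAt, hfw.deriv_eq, deriv_id]
  · rw [← iteratedDeriv_two_comp hf hw, hfw.iteratedDeriv_eq, iteratedDeriv_id]; simp
  · rw [← iteratedDeriv_three_comp hf hw, hfw.iteratedDeriv_eq, iteratedDeriv_id]; simp

end

theorem Complex.two_cosh_sub_sub_two_cosh_eq_of_exp_root {a ν z : ℂ}
    (h : exp z ^ 2 - (ν + 2 * cosh a) * exp a * exp z + exp (2 * a) = 0) :
    2 * cosh (z - a) - 2 * cosh a = ν := by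
  have hz := exp_ne_zero z
  have ha := exp_ne_zero a
  rw [show 2 * a = a + a by ring, exp_add] at h
  rw [sub_eq_iff_eq_add, two_cosh, neg_sub, exp_sub, exp_sub]
  field_simp
  linear_combination h

theorem stmt_5_general (lam c : ℝ)
    (hc : c = Real.exp lam - Real.exp (-lam))
    (ρ : ℂ → ℂ)
    (heq : ∀ᶠ ν in nhds (0 : ℂ),
      (ρ ν) ^ 2 - (ν + 2 * Real.cosh lam) * Real.exp lam * ρ ν
        + Real.exp (2 * lam) = 0)
    (w : ℂ → ℂ) (hw : AnalyticAt ℂ w 0) (hw0 : w 0 = 0)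
    (hlog : ∀ᶠ ν in nhds (0 : ℂ), Complex.exp (w ν) = ρ ν) :
    deriv w 0 = -(1 / (c : ℂ)) ∧
    iteratedDeriv 2 w 0 = 2 * (Real.cosh lam : ℂ) / (c : ℂ) ^ 3 ∧
    iteratedDeriv 3 w 0 = -(6 * ((2 : ℂ) + (c : ℂ) ^ 2 / 3) / (c : ℂ) ^ 5) := by
  set g : ℂ → ℂ := fun z => 2 * Complex.cosh (z - lam) - 2 * Complex.cosh lam
  have hgw : g ∘ w =ᶠ[𝓝 0] id := by
    filter_upwards [heq, hlog] with ν hν hexp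
    apply Complex.two_cosh_sub_sub_two_cosh_eq_of_exp_root
    push_cast at hν
    rwa [hexp]
  have hg : AnalyticAt ℂ g (w 0) := by fun_prop
  have hc2 : (c : ℂ) = 2 * Complex.sinh lam := by
    rw [hc, ← Complex.ofReal_sinh, Real.sinh_eq]
    push_cast; ring
  have hcosh : Complex.cosh lam ^ 2 = 1 + (c : ℂ) ^ 2 / 4 := by
    rw [Complex.cosh_sq, hc2]; ring
  have hg1 : deriv g 0 = -c := by simp [g, hc2]
  have hg2 : iteratedDeriv 2 g 0 = 2 * Complex.cosh lam := by simp [g, iteratedDeriv_succ]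
  have hg3 : iteratedDeriv 3 g 0 = -c := by simp [g, iteratedDeriv_succ, hc2]
  obtain ⟨h1, h2, h3⟩ := iteratedDeriv_relations_of_comp_eventuallyEq_id hg hw hgw
  simp only [hw0, hg1, hg2, hg3] at h1 h2 h3
  have hc0 : (c : ℂ) ≠ 0 := by rintro h; simp [h] at h1
  have hb1 : deriv w 0 = -(1 / (c : ℂ)) := by
    field_simp
    linear_combination -h1
  rw [hb1] at h2 h3
  have hb2 : iteratedDeriv 2 w 0 = 2 * Complex.cosh lam / (c : ℂ) ^ 3 := by
    field_simp at h2 ⊢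
    linear_combination -h2
  rw [hb2] at h3
  push_cast
  refine ⟨hb1, hb2, ?_⟩
  field_simp at h3 ⊢
  linear_combination -3 * h3 - 36 * hcosh

/-- For `λ* > 0` and `c* = e^{λ*} - e^{-λ*}`, the function `ϖ = log ρ₋`, the analytic
logarithm near `0` with `ϖ(0) = 0` of the analytic branch `ρ₋` (with `ρ₋(0)=1`) of the
smaller root of `ρ² - (ν + 2 cosh λ*) e^{λ*} ρ + e^{2λ*} = 0`, satisfies
`ϖ(ν) = -ν/c* + cosh(λ*) ν²/c*³ - Λ* ν³/c*⁵ + O(|ν|⁴)` with `Λ* = 2 + c*²/3`. -/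
theorem stmt_5 (lam c : ℝ) (hlam : 0 < lam)
    (hc : c = Real.exp lam - Real.exp (-lam))
    (ρ : ℂ → ℂ) (hρ : AnalyticAt ℂ ρ 0) (hρ0 : ρ 0 = 1)
    (heq : ∀ᶠ ν in nhds (0 : ℂ),
      (ρ ν) ^ 2 - (ν + 2 * Real.cosh lam) * Real.exp lam * ρ ν
        + Real.exp (2 * lam) = 0)
    (w : ℂ → ℂ) (hw : AnalyticAt ℂ w 0) (hw0 : w 0 = 0)
    (hlog : ∀ᶠ ν in nhds (0 : ℂ), Complex.exp (w ν) = ρ ν) :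
    deriv w 0 = -(1 / (c : ℂ)) ∧
    iteratedDeriv 2 w 0 = 2 * (Real.cosh lam : ℂ) / (c : ℂ) ^ 3 ∧
    iteratedDeriv 3 w 0 = -(6 * ((2 : ℂ) + (c : ℂ) ^ 2 / 3) / (c : ℂ) ^ 5) :=
  stmt_5_general lam c hc ρ heq w hw hw0 hlog
end

section
/- Supersolution inequality for the shifted exponential: let λ* > 0, c* = e^{λ*} − e^{−λ*}, A > 0, set η_A := 2 cosh(λ*) A (1 + M) where M bounds |ω| appropriately, and define w̄_j(t) = K exp(−A((j − J − c*t)/√(t+1) − η_A)) for constants K > 0, J ∈ ℝ. Then d/dt w̄_j(t) − e^{λ*}(w̄_{j−1}(t) − 2 w̄_j(t) + w̄_{j+1}(t)) + c*(w̄_{j+1}(t) − w̄_j(t)) = (A/(t+1))(η/2 − cosh(λ*) A (1 + ω(−A/√(t+1)))) w̄_j(t) where η = (j − J − c*t)/√(t+1) and ω is the analytic function with e^{λ*}(e^{ξ} − 2 + e^{−ξ}) − c*(e^{ξ} − 1) = −c* ξ + cosh(λ*) ξ²(1 + ω(ξ)). -/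
/-!
Write `q = √(t+1)` and `ξ = -A/q`. Since `w̄` is an exponential in `j`, the neighbours are
`w̄_{j±1} = e^{±ξ} w̄_j`, so the lattice operator acts on `w̄_j` as multiplication by the symbol
`e^{λ*}(e^ξ - 2 + e^{-ξ}) - c*(e^ξ - 1) = -c* ξ + cosh(λ*) ξ² (1 + ω ξ)`, with `ξ² = A²/(t+1)`.
The time derivative of `w̄_j` is `A (c*/q + η/(2(t+1))) w̄_j`; the `c*/q` terms cancel and what
remains is the claimed factor.
-/

open Real

lemma symbol_expansion {lam c : ℝ} {ω : ℝ → ℝ}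
    (hω : ∀ ξ : ℝ, ξ ≠ 0 →
      exp lam * (exp ξ - 2 + exp (-ξ)) - c * (exp ξ - 1) = -c * ξ + cosh lam * ξ ^ 2 * (1 + ω ξ))
    (ξ : ℝ) :
    exp lam * (exp ξ - 2 + exp (-ξ)) - c * (exp ξ - 1) = -c * ξ + cosh lam * ξ ^ 2 * (1 + ω ξ) := by
  rcases eq_or_ne ξ 0 with rfl | hξ
  · norm_num
  · exact hω ξ hξ

lemma hasDerivAt_sub_mul_div_sqrt (x c : ℝ) {t : ℝ} (ht : 0 < t + 1) :
    HasDerivAt (fun s => (x - c * s) / √(s + 1))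
      (-(c / √(t + 1)) - (x - c * t) / √(t + 1) / (2 * (t + 1))) t := by
  have hq : √(t + 1) ≠ 0 := (sqrt_pos.mpr ht).ne'
  have hnum : HasDerivAt (fun s => x - c * s) (-c) t := by
    simpa using ((hasDerivAt_id t).const_mul c).const_sub x
  have hden : HasDerivAt (fun s => √(s + 1)) (1 / (2 * √(t + 1))) t := by
    simpa using ((hasDerivAt_id t).add_const 1).sqrt ht.ne'
  refine (hnum.div hden hq).congr_deriv ?_
  rw [sq_sqrt ht.le]
  field_simp
  rw [sq_sqrt ht.le]

lemma hasDerivAt_exp_profile (K A x c ηA : ℝ) {t : ℝ} (ht : 0 < t + 1) :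
    HasDerivAt (fun s => K * exp (-A * ((x - c * s) / √(s + 1) - ηA)))
      (A * (c / √(t + 1) + (x - c * t) / √(t + 1) / (2 * (t + 1)))
        * (K * exp (-A * ((x - c * t) / √(t + 1) - ηA)))) t := by
  refine ((((hasDerivAt_sub_mul_div_sqrt x c ht).sub_const ηA).const_mul (-A)).exp.const_mul K
    ).congr_deriv ?_
  ring

theorem stmt_16_general (lam c A K J ηA : ℝ)
    (ω : ℝ → ℝ)
    (hω : ∀ ξ : ℝ, ξ ≠ 0 →
      Real.exp lam * (Real.exp ξ - 2 + Real.exp (-ξ)) - c * (Real.exp ξ - 1)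
        = -c * ξ + Real.cosh lam * ξ ^ 2 * (1 + ω ξ))
    (w : ℝ → ℤ → ℝ)
    (hw : ∀ t : ℝ, ∀ j : ℤ,
      w t j = K * Real.exp (-A * (((j : ℝ) - J - c * t) / Real.sqrt (t + 1) - ηA))) :
    ∀ t : ℝ, 0 < t → ∀ j : ℤ,
      HasDerivAt (fun s => w s j)
        ((Real.exp lam * (w t (j - 1) - 2 * w t j + w t (j + 1))
            - c * (w t (j + 1) - w t j))
          + (A / (t + 1)) *
              (((j : ℝ) - J - c * t) / Real.sqrt (t + 1) / 2
                - Real.cosh lam * A * (1 + ω (-A / Real.sqrt (t + 1))))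
              * w t j) t := by
  intro t ht j
  have ht1 : 0 < t + 1 := by linarith
  set q := √(t + 1) with hq_def
  have hq : q ≠ 0 := (sqrt_pos.mpr ht1).ne'
  have hq_sq : q ^ 2 = t + 1 := sq_sqrt ht1.le
  have hprev : w t (j - 1) = w t j * exp (A / q) := by
    rw [hw, hw, mul_assoc, ← exp_add]
    congr 2
    push_cast
    field_simp
    ring
  have hnext : w t (j + 1) = w t j * exp (-A / q) := by
    rw [hw, hw, mul_assoc, ← exp_add]
    congr 2
    push_cast
    field_simp
    ring
  have hsymbol := symbol_expansion hω (-A / q)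
  rw [show -(-A / q) = A / q by ring] at hsymbol
  rw [show (fun s => w s j) = _ from funext fun s => hw s j]
  refine (hasDerivAt_exp_profile K A _ c ηA ht1).congr_deriv ?_
  rw [← hw, ← hq_def, hprev, hnext, ← hq_sq]
  linear_combination -w t j * hsymbol

/-- Supersolution identity for the shifted exponential: with
`w̄_j(t) = K exp(-A((j - J - c* t)/√(t+1) - η_A))` and `ω` the analytic function
with `e^{λ*}(e^ξ - 2 + e^{-ξ}) - c*(e^ξ - 1) = -c* ξ + cosh(λ*) ξ²(1 + ω(ξ))`,
one has, for `t > 0` and `j ∈ ℤ`,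
`d/dt w̄_j - (L w̄)_j = (A/(t+1))(η/2 - cosh(λ*) A (1 + ω(-A/√(t+1)))) w̄_j`
where `η = (j - J - c* t)/√(t+1)`. -/
theorem stmt_16 (lam c A K J ηA : ℝ) (hlam : 0 < lam)
    (hc : c = Real.exp lam - Real.exp (-lam)) (hA : 0 < A) (hK : 0 < K)
    (ω : ℝ → ℝ) (hω0 : ω 0 = 0)
    (hω : ∀ ξ : ℝ, ξ ≠ 0 →
      Real.exp lam * (Real.exp ξ - 2 + Real.exp (-ξ)) - c * (Real.exp ξ - 1)
        = -c * ξ + Real.cosh lam * ξ ^ 2 * (1 + ω ξ))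
    (w : ℝ → ℤ → ℝ)
    (hw : ∀ t : ℝ, ∀ j : ℤ,
      w t j = K * Real.exp (-A * (((j : ℝ) - J - c * t) / Real.sqrt (t + 1) - ηA))) :
    ∀ t : ℝ, 0 < t → ∀ j : ℤ,
      HasDerivAt (fun s => w s j)
        ((Real.exp lam * (w t (j - 1) - 2 * w t j + w t (j + 1))
            - c * (w t (j + 1) - w t j))
          + (A / (t + 1)) *
              (((j : ℝ) - J - c * t) / Real.sqrt (t + 1) / 2
                - Real.cosh lam * A * (1 + ω (-A / Real.sqrt (t + 1))))
              * w t j) t :=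
  stmt_16_general lam c A K J ηA ω hω w hw
end
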